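/- For independent nonnegative random variables γ_B and γ_E with PDFs f_B, f_E and CDFs F_B, F_E, the average secrecy capacity satisfies E[max{log₂(1+γ_B) − log₂(1+γ_E), 0}] = (1/ln 2) ∫₀^∞ (1 − F_B(x)) F_E(x) / (1 + x) dx. -/

import Mathlib

/-!
Since `log (1 + b) - log (1 + e) = ∫_e^b dx / (1 + x)`, the positive part of the capacity difference
is the integral of `1 / (1 + x)` over `{x | γ_E ≤ x < γ_B}`. Tonelli exchanges the expectation with
the `x`-integral, and independence factors `P(γ_E ≤ x < γ_B)` as `(1 - F_B(x)) F_E(x)`.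
-/

open MeasureTheory ProbabilityTheory Set
open scoped ENNReal

lemma integral_inv_one_add {e b : ℝ} (he : -1 < e) (hb : -1 < b) :
    ∫ x in e..b, (1 + x)⁻¹ = Real.log (1 + b) - Real.log (1 + e) := by
  rw [intervalIntegral.integral_comp_add_left (fun x => x⁻¹), integral_inv_of_pos (by linarith)
    (by linarith), Real.log_div (by linarith) (by linarith)]

lemma lintegral_Ico_inv_one_add {e b : ℝ} (he : -1 < e) (hb : -1 < b) :
    ∫⁻ x in Ico e b, ENNReal.ofReal (1 + x)⁻¹ =
      ENNReal.ofReal (Real.log (1 + b) - Real.log (1 + e)) := by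
  rcases le_or_gt b e with hbe | heb
  · rw [Ico_eq_empty hbe.not_gt, Measure.restrict_empty, lintegral_zero_measure, eq_comm,
      ENNReal.ofReal_eq_zero, sub_nonpos]
    exact Real.log_le_log (by linarith) (by linarith)
  · have hpos : ∀ x ∈ Icc e b, 0 < 1 + x := fun x hx => by linarith [hx.1]
    have hcont : ContinuousOn (fun x : ℝ => (1 + x)⁻¹) (Icc e b) :=
      (continuousOn_const.add continuousOn_id).inv₀ fun x hx => (hpos x hx).ne'
    rw [← ofReal_integral_eq_lintegral_ofReal (hcont.integrableOn_Icc.mono_set Ico_subset_Icc_self)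
      ((ae_restrict_mem measurableSet_Ico).mono fun x hx =>
        (inv_pos.2 (hpos x (Ico_subset_Icc_self hx))).le),
      integral_Ico_eq_integral_Ioc, ← intervalIntegral.integral_of_le heb.le,
      integral_inv_one_add he hb]

section

variable {Ω : Type*} [MeasurableSpace Ω] {μ : Measure Ω} {X Y : Ω → ℝ}

lemma measurableSet_le_fst_and_lt_fst (hX : Measurable X) (hY : Measurable Y) :
    MeasurableSet {p : Ω × ℝ | Y p.1 ≤ p.2 ∧ p.2 < X p.1} :=
  (measurableSet_le (hY.comp measurable_fst) measurable_snd).inter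
    (measurableSet_lt measurable_snd (hX.comp measurable_fst))

lemma measurable_measure_le_and_lt [SFinite μ] (hX : Measurable X) (hY : Measurable Y) :
    Measurable fun x => μ {ω | Y ω ≤ x ∧ x < X ω} :=
  measurable_measure_prodMk_right (measurableSet_le_fst_and_lt_fst hX hY)

lemma lintegral_lintegral_Ico_eq [SFinite μ] (hX : Measurable X) (hY : Measurable Y)
    {h : ℝ → ℝ≥0∞} (hh : Measurable h) :
    ∫⁻ ω, (∫⁻ x in Ico (Y ω) (X ω), h x) ∂μ = ∫⁻ x, μ {ω | Y ω ≤ x ∧ x < X ω} * h x := by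
  set S : Set (Ω × ℝ) := {p | Y p.1 ≤ p.2 ∧ p.2 < X p.1}
  have hS : MeasurableSet S := measurableSet_le_fst_and_lt_fst hX hY
  calc ∫⁻ ω, (∫⁻ x in Ico (Y ω) (X ω), h x) ∂μ
      = ∫⁻ ω, (∫⁻ x, S.indicator (fun p => h p.2) (ω, x)) ∂μ := by
        refine lintegral_congr fun ω => ?_
        rw [← lintegral_indicator measurableSet_Ico]
        rfl
    _ = ∫⁻ x, ∫⁻ ω, S.indicator (fun p => h p.2) (ω, x) ∂μ :=
        lintegral_lintegral_swap (f := fun ω x => S.indicator (fun p => h p.2) (ω, x))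
          ((hh.comp measurable_snd).indicator hS).aemeasurable
    _ = ∫⁻ x, μ {ω | Y ω ≤ x ∧ x < X ω} * h x := by
        refine lintegral_congr fun x => ?_
        have hx : MeasurableSet {ω | Y ω ≤ x ∧ x < X ω} :=
          (measurableSet_le hY measurable_const).inter (measurableSet_lt measurable_const hX)
        exact (lintegral_indicator_const hx (h x)).trans (mul_comm _ _)

lemma lintegral_ofReal_log_one_add_sub_eq [SFinite μ] (hX : Measurable X) (hY : Measurable Y)
    (hX0 : ∀ ω, 0 ≤ X ω) (hY0 : ∀ ω, 0 ≤ Y ω) :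
    ∫⁻ ω, ENNReal.ofReal (Real.log (1 + X ω) - Real.log (1 + Y ω)) ∂μ =
      ∫⁻ x in Ioi 0, μ {ω | Y ω ≤ x ∧ x < X ω} * ENNReal.ofReal (1 + x)⁻¹ := by
  have hsupp : (fun x => μ {ω | Y ω ≤ x ∧ x < X ω} * ENNReal.ofReal (1 + x)⁻¹).support ⊆
      Ici 0 := by
    refine Function.support_subset_iff'.2 fun x hx => ?_
    have hempty : {ω | Y ω ≤ x ∧ x < X ω} = ∅ :=
      eq_empty_of_forall_notMem fun ω hω => hx ((hY0 ω).trans hω.1)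
    rw [hempty, measure_empty, zero_mul]
  rw [setLIntegral_congr Ioi_ae_eq_Ici, setLIntegral_eq_of_support_subset hsupp,
    ← lintegral_lintegral_Ico_eq hX hY (by fun_prop)]
  refine lintegral_congr fun ω => ?_
  rw [lintegral_Ico_inv_one_add (by linarith [hY0 ω]) (by linarith [hX0 ω])]

lemma toReal_measure_lt_eq_one_sub [IsProbabilityMeasure μ] (hX : Measurable X) (x : ℝ) :
    (μ {ω | x < X ω}).toReal = 1 - (μ {ω | X ω ≤ x}).toReal := by
  have hcompl : {ω | x < X ω} = (X ⁻¹' Iic x)ᶜ := by ext; simp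
  rw [hcompl]
  exact probReal_compl_eq_one_sub (hX measurableSet_Iic)

lemma ProbabilityTheory.IndepFun.measure_le_and_lt_eq_mul (hXY : IndepFun X Y μ) (x : ℝ) :
    μ {ω | Y ω ≤ x ∧ x < X ω} = μ {ω | x < X ω} * μ {ω | Y ω ≤ x} := by
  have h := hXY.measure_inter_preimage_eq_mul (Ioi x) (Iic x) measurableSet_Ioi measurableSet_Iic
  rwa [inter_comm] at h

end

theorem average_secrecy_capacity_integral_general
    {Ω : Type*} [MeasurableSpace Ω] (μ : Measure Ω) [IsProbabilityMeasure μ]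
    (γB γE : Ω → ℝ) (hγB : Measurable γB) (hγE : Measurable γE)
    (hBpos : ∀ ω, 0 ≤ γB ω) (hEpos : ∀ ω, 0 ≤ γE ω)
    (hindep : IndepFun γB γE μ)
    (FB FE : ℝ → ℝ)
    (hFB : ∀ x, FB x = (μ {ω | γB ω ≤ x}).toReal)
    (hFE : ∀ x, FE x = (μ {ω | γE ω ≤ x}).toReal) :
    ∫ ω, max (Real.logb 2 (1 + γB ω) - Real.logb 2 (1 + γE ω)) 0 ∂μ
      = (1 / Real.log 2) * ∫ x in Set.Ioi (0:ℝ), (1 - FB x) * FE x / (1 + x) := by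
  have hlog2 : 0 < Real.log 2 := Real.log_pos one_lt_two
  have hLHS : ∀ ω, max (Real.logb 2 (1 + γB ω) - Real.logb 2 (1 + γE ω)) 0 =
      (ENNReal.ofReal (Real.log (1 + γB ω) - Real.log (1 + γE ω))).toReal / Real.log 2 := by
    intro ω
    rw [ENNReal.toReal_ofReal', Real.logb, Real.logb, ← sub_div, ← max_div_div_right hlog2.le,
      zero_div]
  have hRHS : ∀ x ∈ Ioi (0 : ℝ), (1 - FB x) * FE x / (1 + x) =
      (μ {ω | γE ω ≤ x ∧ x < γB ω} * ENNReal.ofReal (1 + x)⁻¹).toReal := by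
    intro x hx
    rw [hindep.measure_le_and_lt_eq_mul, ENNReal.toReal_mul, ENNReal.toReal_mul,
      toReal_measure_lt_eq_one_sub hγB, hFB, hFE,
      ENNReal.toReal_ofReal (inv_nonneg.2 (by linarith [mem_Ioi.1 hx])), div_eq_mul_inv]
  have hmeas : Measurable fun x => μ {ω | γE ω ≤ x ∧ x < γB ω} * ENNReal.ofReal (1 + x)⁻¹ :=
    (measurable_measure_le_and_lt hγB hγE).mul (by fun_prop)
  simp_rw [hLHS]
  rw [integral_div, setIntegral_congr_fun measurableSet_Ioi hRHS,
    integral_toReal (by fun_prop) (ae_of_all _ fun ω => ENNReal.ofReal_lt_top),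
    integral_toReal hmeas.aemeasurable
      (ae_of_all _ fun x => ENNReal.mul_lt_top (measure_lt_top _ _) ENNReal.ofReal_lt_top),
    lintegral_ofReal_log_one_add_sub_eq hγB hγE hBpos hEpos]
  ring

/-- The average secrecy capacity of independent SNRs `γ_B, γ_E` equals
`(1/ln 2) ∫₀^∞ (1 − F_B(x)) F_E(x) / (1+x) dx`. -/
theorem average_secrecy_capacity_integral
    {Ω : Type*} [MeasurableSpace Ω] (μ : Measure Ω) [IsProbabilityMeasure μ]
    (γB γE : Ω → ℝ) (hγB : Measurable γB) (hγE : Measurable γE)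
    (hBpos : ∀ ω, 0 ≤ γB ω) (hEpos : ∀ ω, 0 ≤ γE ω)
    (hindep : IndepFun γB γE μ)
    (hintB : Integrable γB μ) (hintE : Integrable γE μ)
    (fB fE : ℝ → ℝ)
    (hfB : μ.map γB = volume.withDensity (fun x => ENNReal.ofReal (fB x)))
    (hfE : μ.map γE = volume.withDensity (fun x => ENNReal.ofReal (fE x)))
    (FB FE : ℝ → ℝ)
    (hFB : ∀ x, FB x = (μ {ω | γB ω ≤ x}).toReal)
    (hFE : ∀ x, FE x = (μ {ω | γE ω ≤ x}).toReal) :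
    ∫ ω, max (Real.logb 2 (1 + γB ω) - Real.logb 2 (1 + γE ω)) 0 ∂μ
      = (1 / Real.log 2) * ∫ x in Set.Ioi (0:ℝ), (1 - FB x) * FE x / (1 + x) :=
  average_secrecy_capacity_integral_general μ γB γE hγB hγE hBpos hEpos hindep FB FE hFB hFE
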